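/- Let G be a finite DAG and X, Y, Z disjoint (not necessarily exhaustive) subsets of vertices with X, Y d-separated by Z. Then in the ancestral closure An(X ∪ Y ∪ Z), there exists a partition X̃ ⊇ X, Ỹ ⊇ Y, Z of all vertices of the induced subgraph on An(X ∪ Y ∪ Z) such that Z still d-separates X̃ from Ỹ. -/

import Mathlib

open Classical

/-- Ancestors of a set `W` of vertices: all `u` with a directed path (possibly of
length 0) from `u` to some element of `W`. -/
def An {V : Type} (E : V → V → Prop) (W : Set V) : Set V :=
  {u | ∃ w ∈ W, Relation.ReflTransGen E u w}

/-- Parents of a vertex `v`. -/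
def Pa {V : Type} (E : V → V → Prop) (v : V) : Set V := {u | E u v}

/-- Acyclicity of a directed graph. -/
def IsAcyclicDigraph {V : Type} (E : V → V → Prop) : Prop :=
  ∀ v, ¬ Relation.TransGen E v v

/-- Marginal of a joint distribution `P` on `∏ v, X v` onto the coordinates in `S`,
evaluated at (the `S`-coordinates of) `x`. -/
noncomputable def marg {V : Type} [Fintype V] [DecidableEq V] {X : V → Type}
    [∀ v, Fintype (X v)] (P : (∀ v, X v) → ℝ) (S : Set V) (x : ∀ v, X v) : ℝ :=
  ∑ y : ∀ v, X v, if ∀ v ∈ S, y v = x v then P y else 0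

/-- Conditional independence `A ⊥ B | S` for a finite joint distribution `P`:
`P(a,b,s)·P(s) = P(a,s)·P(b,s)` for all values (phrased via marginals). -/
def CondIndep {V : Type} [Fintype V] [DecidableEq V] {X : V → Type}
    [∀ v, Fintype (X v)] (P : (∀ v, X v) → ℝ) (A B S : Set V) : Prop :=
  ∀ x : ∀ v, X v,
    marg P (A ∪ B ∪ S) x * marg P S x = marg P (A ∪ S) x * marg P (B ∪ S) x

/-- `P` factorizes according to the directed graph `E`: `P(x) = ∏ v K v (x)` for
stochastic kernels `K v` depending only on the coordinate `v` and its parents. -/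
def Factorizes {V : Type} [Fintype V] [DecidableEq V] {X : V → Type}
    [∀ v, Fintype (X v)] (E : V → V → Prop) (P : (∀ v, X v) → ℝ) : Prop :=
  ∃ K : (v : V) → (∀ u, X u) → ℝ,
    (∀ v x, 0 ≤ K v x) ∧
    (∀ v x, ∑ a : X v, K v (Function.update x v a) = 1) ∧
    (∀ v x x', x v = x' v → (∀ u, E u v → x u = x' u) → K v x = K v x') ∧
    (∀ x, P x = ∏ v, K v x)

/-- An undirected walk in the directed graph `E`. -/
def IsUWalk {V : Type} (E : V → V → Prop) (p : List V) : Prop :=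
  p.Chain' fun a b => E a b ∨ E b a

/-- An undirected path `p` is blocked by `Z` (Pearl): it contains a chain or fork
whose middle vertex is in `Z`, or a collider whose middle vertex is not an ancestor
of `Z`. -/
def Blocked {V : Type} (E : V → V → Prop) (Z : Set V) (p : List V) : Prop :=
  ∃ (i : ℕ) (a m b : V), p[i]? = some a ∧ p[i+1]? = some m ∧ p[i+2]? = some b ∧
    ((((E a m ∧ E m b) ∨ (E m a ∧ E b m) ∨ (E m a ∧ E m b)) ∧ m ∈ Z) ∨
      ((E a m ∧ E b m) ∧ m ∉ An E Z))

/-- Classical d-separation: every undirected path between `X` and `Y` is blocked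
by `Z`. -/
def DSep {V : Type} (E : V → V → Prop) (X Y Z : Set V) : Prop :=
  ∀ p : List V, IsUWalk E p → p.Nodup →
    (∃ x ∈ X, p.head? = some x) → (∃ y ∈ Y, p.getLast? = some y) → Blocked E Z p

/-!
Let `A = An(X ∪ Y ∪ Z)`, let `X̃` be the set of vertices of `A \ Z` reachable from `X` by an
active walk (not necessarily a path) of the whole graph, and `Ỹ = A \ (X̃ ∪ Z)`. An active walk
of the induced graph from `v ∈ X̃` to `w ∈ Ỹ` could be appended to an active walk from `X` to `v`,
unless `v` thereby becomes a collider outside `An Z`. In that case `v ∈ A` gives a directed path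
from `v` into `X ∪ Y` avoiding `Z`; going up it from `X` and then along the walk puts `w` in `X̃`,
while following the active walk from `X` to `v` and then down it into `Y` contradicts
d-separation. The latter needs that in a DAG an active walk can be shortened to an active path:
cutting out a loop at `v` cannot make `v` a blocking collider, since then the loop leaves and
re-enters `v` through children of `v`, so it turns around at a collider that is both a descendant
of `v` and an ancestor of `Z`.
-/

theorem List.exists_eq_append_cons_append_cons_of_not_nodup {α : Type*} {l : List α}
    (h : ¬ l.Nodup) :
    ∃ l₁ v l₂ l₃, l = l₁ ++ v :: l₂ ++ v :: l₃ := by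
  obtain ⟨v, hv⟩ : ∃ v, List.Sublist [v, v] l := by simpa [List.nodup_iff_sublist] using h
  obtain ⟨r₁, r₂, rfl, h₁, h₂⟩ := List.cons_sublist_iff.mp hv
  obtain ⟨l₁, l₂, rfl⟩ := List.append_of_mem h₁
  obtain ⟨s, l₃, rfl⟩ := List.append_of_mem (h₂.subset (List.mem_singleton_self v))
  exact ⟨l₁, v, l₂ ++ s, l₃, by simp⟩

section DSepWalks

variable {V : Type} {E : V → V → Prop} {Z : Set V}

theorem IsAcyclicDigraph.asymm (hacyc : IsAcyclicDigraph E) {u v : V} (h : E u v) : ¬ E v u :=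
  fun h' => hacyc u (.tail (.single h) h')

theorem subset_An (W : Set V) : W ⊆ An E W :=
  fun w hw => ⟨w, hw, .refl⟩

theorem mem_An_of_rel {W : Set V} {u v : V} (h : E u v) (hv : v ∈ An E W) : u ∈ An E W :=
  let ⟨w, hw, hvw⟩ := hv
  ⟨w, hw, .head h hvw⟩

theorem An_mono {E' : V → V → Prop} (h : ∀ u v, E' u v → E u v) (W : Set V) :
    An E' W ⊆ An E W :=
  fun _ ⟨w, hw, huw⟩ => ⟨w, hw, Relation.ReflTransGen.mono h _ _ huw⟩

theorem blocked_triple_iff {a m b : V} :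
    Blocked E Z [a, m, b] ↔
      (((E a m ∧ E m b) ∨ (E m a ∧ E b m) ∨ (E m a ∧ E m b)) ∧ m ∈ Z) ∨
        ((E a m ∧ E b m) ∧ m ∉ An E Z) := by
  constructor
  · rintro ⟨i, a', m', b', ha, hm, hb, h⟩
    obtain rfl : i = 0 := by
      by_contra hi
      simp [List.getElem?_eq_none (by simp; omega : [a, m, b].length ≤ i + 2)] at hb
    simp_all
  · exact fun h => ⟨0, a, m, b, rfl, rfl, rfl, h⟩

theorem blocked_triple_comm {a m b : V} : Blocked E Z [a, m, b] ↔ Blocked E Z [b, m, a] := by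
  simp only [blocked_triple_iff]
  tauto

theorem not_blocked_triple_of_rel_right (hacyc : IsAcyclicDigraph E) {a m b : V} (hm : m ∉ Z)
    (hmb : E m b) : ¬ Blocked E Z [a, m, b] := by
  simp only [blocked_triple_iff]
  have := hacyc.asymm hmb
  tauto

theorem blocked_iff_exists_infix {p : List V} :
    Blocked E Z p ↔ ∃ a m b, [a, m, b] <:+: p ∧ Blocked E Z [a, m, b] := by
  simp only [blocked_triple_iff, List.infix_iff_getElem?]
  constructor
  · rintro ⟨i, a, m, b, ha, hm, hb, h⟩
    refine ⟨a, m, b, ⟨i, ?_, fun j hj => ?_⟩, h⟩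
    · have := (List.getElem?_eq_some_iff.mp hb).1
      simp only [List.length_cons, List.length_nil]
      omega
    · simp only [List.length_cons, List.length_nil] at hj
      interval_cases j <;> simp_all [Nat.add_comm]
  · rintro ⟨a, m, b, ⟨i, -, hi⟩, h⟩
    exact ⟨i, a, m, b, by simpa using hi 0, by simpa [Nat.add_comm] using hi 1,
      by simpa [Nat.add_comm] using hi 2, h⟩

theorem Blocked.mono_infix {p q : List V} (hq : q <:+: p) (h : Blocked E Z q) : Blocked E Z p :=
  let ⟨a, m, b, hi, hb⟩ := blocked_iff_exists_infix.mp h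
  blocked_iff_exists_infix.mpr ⟨a, m, b, hi.trans hq, hb⟩

theorem blocked_reverse_iff {p : List V} : Blocked E Z p.reverse ↔ Blocked E Z p := by
  suffices ∀ p : List V, Blocked E Z p → Blocked E Z p.reverse from
    ⟨fun h => p.reverse_reverse ▸ this _ h, this p⟩
  intro p h
  obtain ⟨a, m, b, hi, hb⟩ := blocked_iff_exists_infix.mp h
  exact blocked_iff_exists_infix.mpr
    ⟨b, m, a, by simpa using List.reverse_infix.mpr hi, blocked_triple_comm.mp hb⟩

theorem blocked_append_cons_iff {l₁ l₂ : List V} {v : V} :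
    Blocked E Z (l₁ ++ v :: l₂) ↔ Blocked E Z (l₁ ++ [v]) ∨ Blocked E Z (v :: l₂) ∨
      ∃ a b, l₁.getLast? = some a ∧ l₂.head? = some b ∧ Blocked E Z [a, v, b] := by
  refine ⟨fun h => ?_, ?_⟩
  swap
  · rintro (h | h | ⟨a, b, ha, hb, h⟩)
    · exact h.mono_infix ⟨[], l₂, by simp⟩
    · exact h.mono_infix ⟨l₁, [], by simp⟩
    · obtain ⟨s, rfl⟩ := List.getLast?_eq_some_iff.mp ha
      obtain ⟨t, rfl⟩ := List.head?_eq_some_iff.mp hb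
      exact h.mono_infix ⟨s, t, by simp⟩
  obtain ⟨a, m, b, hi, hb⟩ := blocked_iff_exists_infix.mp h
  rcases List.infix_append_iff_ne_nil.mp hi with h₁ | h₂ | ⟨s, t, hs, ht, hst, hsuf, hpre⟩
  · exact Or.inl (hb.mono_infix (List.infix_append_of_infix_left h₁))
  · exact Or.inr (Or.inl (hb.mono_infix h₂))
  · match s, t, hst with
    | [a'], [m', b'], hst =>
      simp only [List.cons_append, List.nil_append, List.cons.injEq] at hst
      obtain ⟨rfl, rfl, rfl, -⟩ := hst
      obtain ⟨rfl, hb'⟩ := List.cons_prefix_cons.mp hpre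
      exact Or.inr (Or.inr ⟨a, b, List.singleton_suffix_iff_getLast?_eq_some.mp hsuf,
        List.singleton_prefix_iff_head?_eq_some.mp hb', hb⟩)
    | [a', m'], [b'], hst =>
      simp only [List.cons_append, List.nil_append, List.cons.injEq] at hst
      obtain ⟨rfl, rfl, rfl, -⟩ := hst
      obtain rfl := List.singleton_prefix_cons_iff.mp hpre
      obtain ⟨r, rfl⟩ := hsuf
      exact Or.inl (hb.mono_infix ⟨r, [], by simp⟩)
    | [], _, _ => exact absurd rfl hs
    | _, [], _ => exact absurd rfl ht
    | _ :: _ :: _ :: _, _ :: _, hst | _ :: _ :: _, _ :: _ :: _, hst =>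
      have := congrArg List.length hst
      simp only [List.length_cons, List.length_nil, List.length_append] at this
      omega

variable (E Z) in
def IsActiveWalk (p : List V) : Prop :=
  IsUWalk E p ∧ ¬ Blocked E Z p

theorem IsActiveWalk.infix {p q : List V} (h : IsActiveWalk E Z p) (hq : q <:+: p) :
    IsActiveWalk E Z q :=
  ⟨List.IsChain.infix h.1 hq, fun hb => h.2 (hb.mono_infix hq)⟩

theorem IsActiveWalk.reverse {p : List V} (h : IsActiveWalk E Z p) :
    IsActiveWalk E Z p.reverse :=
  ⟨List.isChain_reverse.mpr (h.1.imp fun _ _ => Or.symm),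
    fun hb => h.2 (blocked_reverse_iff.mp hb)⟩

theorem IsActiveWalk.append {l₁ l₂ : List V} {v : V} (h₁ : IsActiveWalk E Z (l₁ ++ [v]))
    (h₂ : IsActiveWalk E Z (v :: l₂))
    (hv : ∀ a b, l₁.getLast? = some a → l₂.head? = some b → ¬ Blocked E Z [a, v, b]) :
    IsActiveWalk E Z (l₁ ++ v :: l₂) := by
  refine ⟨?_, fun hb => ?_⟩
  · have h₁' := List.isChain_append.mp h₁.1
    exact h₁'.1.append h₂.1 (by simpa using h₁'.2.2)
  · rcases blocked_append_cons_iff.mp hb with hb | hb | ⟨a, b, ha, hb', hab⟩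
    exacts [h₁.2 hb, h₂.2 hb, hv a b ha hb' hab]

theorem isActiveWalk_of_isChain (hacyc : IsAcyclicDigraph E) {v : V} {l : List V}
    (h : (v :: l).IsChain E) (hv : v ∉ An E Z) : IsActiveWalk E Z (v :: l) := by
  refine ⟨h.imp fun _ _ => Or.inl, fun hb => ?_⟩
  obtain ⟨a, m, b, hi, hb⟩ := blocked_iff_exists_infix.mp hb
  have hm : m ∉ An E Z :=
    List.IsChain.induction (· ∉ An E Z) (v :: l) h
      (fun _ _ hxy hx hy => hx (mem_An_of_rel hxy hy)) (fun _ => hv) m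
      (hi.subset (by simp))
  have hmb : E m b := (List.isChain_cons_cons.mp (h.infix hi).tail).1
  exact not_blocked_triple_of_rel_right hacyc (fun hmZ => hm (subset_An Z hmZ)) hmb hb

theorem IsActiveWalk.mem_An_of_not_isChain {v c : V} {l : List V}
    (h : IsActiveWalk E Z (v :: c :: l)) (hvc : E v c) (hl : ¬ (v :: c :: l).IsChain E) :
    v ∈ An E Z := by
  induction l generalizing v c with
  | nil => exact absurd (.cons_cons hvc (.singleton c)) hl
  | cons d l ih =>
    refine mem_An_of_rel hvc ?_
    by_cases hcd : E c d
    · exact ih (h.infix (List.suffix_cons _ _).isInfix) hcd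
        fun hc => hl (.cons_cons hvc hc)
    · have hdc : E d c := by
        simpa [hcd] using (List.isChain_cons_cons.mp h.1.tail).1
      have hcol := mt (Blocked.mono_infix (List.prefix_append [v, c, d] l).isInfix) h.2
      simp only [blocked_triple_iff] at hcol
      tauto

theorem not_blocked_triple_of_loop {a b c d v : V} (hac : ¬ Blocked E Z [a, v, c])
    (hdb : ¬ Blocked E Z [d, v, b]) (hvc : E v c ∨ E c v) (hdv : E d v ∨ E v d)
    (hloop : E v c → E v d → v ∈ An E Z) : ¬ Blocked E Z [a, v, b] := by
  rw [blocked_triple_iff] at hac hdb ⊢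
  rintro (⟨hpat, hvZ⟩ | ⟨⟨hav, hbv⟩, hvAn⟩)
  · have hout : E v a ∨ E v b := by
      rcases hpat with ⟨-, h⟩ | ⟨h, -⟩ | ⟨h, -⟩
      exacts [.inr h, .inl h, .inl h]
    rcases hout with hva | hvb
    · refine hac (.inl ⟨?_, hvZ⟩)
      exact hvc.elim (fun h => .inr (.inr ⟨hva, h⟩)) (fun h => .inr (.inl ⟨hva, h⟩))
    · refine hdb (.inl ⟨?_, hvZ⟩)
      exact hdv.elim (fun h => .inl ⟨h, hvb⟩) (fun h => .inr (.inr ⟨h, hvb⟩))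
  · refine hvAn (hloop ?_ ?_)
    · exact hvc.resolve_right fun hcv => hac (.inr ⟨⟨hav, hcv⟩, hvAn⟩)
    · exact hdv.resolve_left fun hdv => hdb (.inr ⟨⟨hdv, hbv⟩, hvAn⟩)

theorem IsActiveWalk.splice (hacyc : IsAcyclicDigraph E) {l₁ l₂ l₃ : List V} {v : V}
    (h : IsActiveWalk E Z (l₁ ++ v :: l₂ ++ v :: l₃)) : IsActiveWalk E Z (l₁ ++ v :: l₃) := by
  refine IsActiveWalk.append (h.infix ⟨[], l₂ ++ v :: l₃, by simp⟩)
    (h.infix ⟨l₁ ++ v :: l₂, [], by simp⟩) fun a b ha hb => ?_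
  obtain ⟨s, rfl⟩ := List.getLast?_eq_some_iff.mp ha
  obtain ⟨t, rfl⟩ := List.head?_eq_some_iff.mp hb
  set L := v :: (l₂ ++ [v]) with hL
  have hsub : IsActiveWalk E Z (a :: L ++ [b]) := h.infix ⟨s, t, by simp [L]⟩
  obtain ⟨c, r, hcr⟩ := List.exists_cons_of_ne_nil (List.concat_ne_nil v l₂)
  obtain ⟨r', d, hdr⟩ := (List.eq_nil_or_concat (v :: l₂)).resolve_left (List.cons_ne_nil v l₂)
  have hL₁ : L = v :: c :: r := by rw [hL, hcr]
  have hL₂ : L = r' ++ [d, v] := by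
    rw [hL, ← List.cons_append, hdr, List.concat_eq_append, List.append_assoc]; rfl
  refine not_blocked_triple_of_loop (c := c) (d := d) ?_ ?_ ?_ ?_ fun hvc hvd => ?_
  · exact mt (Blocked.mono_infix ⟨[], r ++ [b], by simp [hL₁]⟩) hsub.2
  · exact mt (Blocked.mono_infix ⟨a :: r', [], by simp [hL₂]⟩) hsub.2
  · simpa using hsub.1.infix (l₁ := [v, c]) ⟨[a], r ++ [b], by simp [hL₁]⟩
  · simpa using hsub.1.infix (l₁ := [d, v]) ⟨a :: r', [b], by simp [hL₂]⟩
  · have hloop : IsActiveWalk E Z L := hsub.infix ⟨[a], [b], rfl⟩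
    rw [hL₁] at hloop
    refine hloop.mem_An_of_not_isChain hvc fun hch => hacyc.asymm hvd ?_
    exact List.isChain_pair.mp (hch.infix ⟨r', [], by simp [← hL₁, hL₂]⟩)

theorem IsActiveWalk.exists_nodup (hacyc : IsAcyclicDigraph E) {p : List V}
    (h : IsActiveWalk E Z p) :
    ∃ q, IsActiveWalk E Z q ∧ q.Nodup ∧ q.head? = p.head? ∧ q.getLast? = p.getLast? := by
  by_cases hp : p.Nodup
  · exact ⟨p, h, hp, rfl, rfl⟩
  obtain ⟨l₁, v, l₂, l₃, hsplit⟩ := List.exists_eq_append_cons_append_cons_of_not_nodup hp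
  obtain ⟨q, hq, hnd, hhead, hlast⟩ := (hsplit ▸ h |>.splice hacyc).exists_nodup hacyc
  refine ⟨q, hq, hnd, hhead.trans ?_, hlast.trans ?_⟩ <;> rw [hsplit]
  · cases l₁ <;> simp
  · simp [List.getLast?_cons]
termination_by p.length
decreasing_by simp [hsplit]

theorem DSep.not_isActiveWalk {X Y : Set V} (hacyc : IsAcyclicDigraph E) (hsep : DSep E X Y Z)
    {p : List V} (hp : IsActiveWalk E Z p) (hX : ∃ x ∈ X, p.head? = some x)
    (hY : ∃ y ∈ Y, p.getLast? = some y) : False := by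
  obtain ⟨q, hq, hnd, hhead, hlast⟩ := hp.exists_nodup hacyc
  exact hq.2 (hsep q hq.1 hnd (hhead ▸ hX) (hlast ▸ hY))

theorem blocked_triple_restrict {A : Set V} {a m b : V} (ha : a ∈ A) (hm : m ∈ A)
    (hb : b ∈ A) (h : Blocked E Z [a, m, b]) :
    Blocked (fun u w => E u w ∧ u ∈ A ∧ w ∈ A) Z [a, m, b] := by
  simp only [blocked_triple_iff, ha, hm, hb, and_true] at h ⊢
  exact h.imp_right fun h => ⟨h.1, fun h' => h.2 (An_mono (fun _ _ => And.left) Z h')⟩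

theorem IsActiveWalk.of_restrict {A : Set V} {p : List V}
    (h : IsActiveWalk (fun u w => E u w ∧ u ∈ A ∧ w ∈ A) Z p) : IsActiveWalk E Z p := by
  refine ⟨h.1.imp fun _ _ => Or.imp And.left And.left, fun hb => h.2 ?_⟩
  obtain ⟨a, m, b, hi, hb⟩ := blocked_iff_exists_infix.mp hb
  have hwalk := h.1.infix hi
  simp only [List.isChain_cons_cons, List.isChain_singleton] at hwalk
  obtain ⟨⟨-, ha, hm⟩ | ⟨-, hm, ha⟩, ⟨-, -, hb'⟩ | ⟨-, hb', -⟩, -⟩ := hwalk <;>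
    exact (blocked_triple_restrict ha hm hb' hb).mono_infix hi

theorem exists_isChain_of_mem_An_of_not_mem_An {W : Set V} {v : V} (hv : v ∈ An E (W ∪ Z))
    (hvZ : v ∉ An E Z) : ∃ l w, (v :: l).IsChain E ∧ (v :: l).getLast? = some w ∧ w ∈ W := by
  obtain ⟨w, hw, hvw⟩ := hv
  obtain ⟨l, hl, rfl⟩ := List.exists_isChain_cons_of_relationReflTransGen hvw
  exact ⟨l, _, hl, List.getLast?_eq_some_getLast _,
    hw.resolve_right fun hwZ => hvZ ⟨_, hwZ, hvw⟩⟩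

-- Walks rather than paths, so that active walks can be concatenated; the set `X̃` of the proof
-- is `activeReach E Z X ∩ An E (X ∪ Y ∪ Z) \ Z`.
variable (E Z) in
def activeReach (X : Set V) : Set V :=
  {v | ∃ p, IsActiveWalk E Z p ∧ (∃ x ∈ X, p.head? = some x) ∧ p.getLast? = some v}

theorem not_blocked_singleton (x : V) : ¬ Blocked E Z [x] := by
  rintro ⟨i, a, m, b, -, -, h, -⟩
  simp at h

theorem subset_activeReach (X : Set V) : X ⊆ activeReach E Z X := fun x hx =>
  ⟨[x], ⟨List.isChain_singleton x, not_blocked_singleton x⟩, ⟨x, hx, rfl⟩, rfl⟩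

theorem mem_activeReach_of_isActiveWalk (hacyc : IsAcyclicDigraph E) {X Y : Set V}
    (hsep : DSep E X Y Z) {v w : V} {p : List V} (hv : v ∈ activeReach E Z X) (hvZ : v ∉ Z)
    (hvA : v ∈ An E (X ∪ Y ∪ Z)) (hp : IsActiveWalk E Z (v :: p))
    (hw : (v :: p).getLast? = some w) : w ∈ activeReach E Z X := by
  obtain ⟨q, hq, ⟨x, hx, hqx⟩, hqv⟩ := hv
  obtain ⟨q, rfl⟩ := List.getLast?_eq_some_iff.mp hqv
  rcases (Classical.em
      (∃ a b, q.getLast? = some a ∧ p.head? = some b ∧ Blocked E Z [a, v, b])).symm with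
    hj | ⟨a, b, -, -, hab⟩
  · exact ⟨q ++ v :: p, hq.append hp fun a b ha hb hab => hj ⟨a, b, ha, hb, hab⟩,
      ⟨x, hx, by simpa [List.head?_append] using hqx⟩, by simp [List.getLast?_append, hw]⟩
  have hvAn : v ∉ An E Z := by
    simp only [blocked_triple_iff, hvZ, and_false, false_or] at hab
    exact hab.2
  obtain ⟨l, u, hl, hlu, hu⟩ := exists_isChain_of_mem_An_of_not_mem_An hvA hvAn
  have hdown := isActiveWalk_of_isChain hacyc hl hvAn
  have hout : ∀ a b, l.head? = some b → ¬ Blocked E Z [a, v, b] := fun a b hb =>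
    not_blocked_triple_of_rel_right hacyc hvZ ((List.isChain_cons.mp hl).1 b hb)
  rcases hu with huX | huY
  · refine ⟨l.reverse ++ v :: p, IsActiveWalk.append (by simpa using hdown.reverse) hp
      fun a b ha _ hab => hout b a (by simpa using ha) (blocked_triple_comm.mp hab),
      ⟨u, huX, ?_⟩, by simp [List.getLast?_append, hw]⟩
    rw [← hlu, List.head?_append, List.head?_reverse, List.getLast?_cons]
    cases l.getLast? <;> rfl
  · exact (hsep.not_isActiveWalk hacyc (hq.append hdown fun a b _ hb => hout a b hb)
      ⟨x, hx, by simpa [List.head?_append] using hqx⟩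
      ⟨u, huY, by rw [List.getLast?_append, hlu]; rfl⟩).elim

end DSepWalks

theorem dsep_extend_partition_general {V : Type}
    (E : V → V → Prop) (hacyc : IsAcyclicDigraph E)
    (X Y Z : Set V)
    (hXZ : Disjoint X Z) (hYZ : Disjoint Y Z)
    (hsep : DSep E X Y Z) :
    ∃ Xt Yt : Set V,
      X ⊆ Xt ∧ Y ⊆ Yt ∧
      Disjoint Xt Yt ∧ Disjoint Xt Z ∧ Disjoint Yt Z ∧
      Xt ∪ Yt ∪ Z = An E (X ∪ Y ∪ Z) ∧
      DSep (fun u w => E u w ∧ u ∈ An E (X ∪ Y ∪ Z) ∧ w ∈ An E (X ∪ Y ∪ Z))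
        Xt Yt Z := by
  set A := An E (X ∪ Y ∪ Z)
  have hA : X ∪ Y ∪ Z ⊆ A := subset_An _
  have hY : ∀ y ∈ Y, y ∉ activeReach E Z X := fun y hy ⟨_, hp, hpX, hpy⟩ =>
    hsep.not_isActiveWalk hacyc hp hpX ⟨y, hy, hpy⟩
  refine ⟨{v ∈ A | v ∉ Z ∧ v ∈ activeReach E Z X}, {v ∈ A | v ∉ Z ∧ v ∉ activeReach E Z X},
    fun x hx => ⟨hA (.inl (.inl hx)), hXZ.notMem_of_mem_left hx, subset_activeReach X hx⟩,
    fun y hy => ⟨hA (.inl (.inr hy)), hYZ.notMem_of_mem_left hy, hY y hy⟩,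
    Set.disjoint_left.mpr fun _ hx hy => hy.2.2 hx.2.2,
    Set.disjoint_left.mpr fun _ hx => hx.2.1, Set.disjoint_left.mpr fun _ hy => hy.2.1, ?_, ?_⟩
  · ext v
    have := @hA v
    simp only [Set.mem_union, Set.mem_sep_iff] at this ⊢
    tauto
  · rintro p hp - ⟨a, ha, hpa⟩ ⟨b, hb, hpb⟩
    by_contra hnb
    obtain ⟨p, rfl⟩ := List.head?_eq_some_iff.mp hpa
    exact hb.2.2 (mem_activeReach_of_isActiveWalk hacyc hsep ha.2.2 ha.2.1 ha.1
      (IsActiveWalk.of_restrict ⟨hp, hnb⟩) hpb)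

/-- DAG instance of Lemma 6.8 of Fritz–Klingler: if disjoint (not necessarily
exhaustive) vertex sets `X`, `Y` are d-separated by `Z`, then the vertices of the
induced subgraph on `A := An(X ∪ Y ∪ Z)` can be partitioned as `X̃ ⊇ X`, `Ỹ ⊇ Y`, `Z`
such that `Z` still d-separates `X̃` from `Ỹ` in the induced subgraph. -/
theorem dsep_extend_partition {V : Type} [Fintype V] [DecidableEq V]
    (E : V → V → Prop) (hacyc : IsAcyclicDigraph E)
    (X Y Z : Set V)
    (hXY : Disjoint X Y) (hXZ : Disjoint X Z) (hYZ : Disjoint Y Z)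
    (hsep : DSep E X Y Z) :
    ∃ Xt Yt : Set V,
      X ⊆ Xt ∧ Y ⊆ Yt ∧
      Disjoint Xt Yt ∧ Disjoint Xt Z ∧ Disjoint Yt Z ∧
      Xt ∪ Yt ∪ Z = An E (X ∪ Y ∪ Z) ∧
      DSep (fun u w => E u w ∧ u ∈ An E (X ∪ Y ∪ Z) ∧ w ∈ An E (X ∪ Y ∪ Z))
        Xt Yt Z :=
  dsep_extend_partition_general E hacyc X Y Z hXZ hYZ hsep
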